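/- arXiv:2004.08691 — 4 statements merged into one kernel-verified Lean document; each statement's English description precedes it below -/
import Mathlib

section
/- Let F be convex differentiable, ψ_k as above with minimizer x_k, A_{k+1} = A_k + a_{k+1}. Then for all x, y_{k+1}, z_k ∈ ℝ^d: ψ_{k+1}(x) − A_{k+1}F(y_{k+1}) − (ψ_k(x_k) − A_k F(z_k)) ≥ A_{k+1} ⟨∇F(y_{k+1}), (a_{k+1}/A_{k+1}) x + (A_k/A_{k+1}) z_k − y_{k+1}⟩ + ½‖x − x_k‖². -/
open Finset InnerProductSpace

lemma grad_ineq {d : ℕ} (F : EuclideanSpace ℝ (Fin d) → ℝ)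
    (hF : ConvexOn ℝ Set.univ F) (hFd : Differentiable ℝ F)
    (v z : EuclideanSpace ℝ (Fin d)) :
    F v + inner ℝ (gradient F v) (z - v) ≤ F z := by
  set φ : ℝ → ℝ := fun t => F (v + t • (z - v)) with hφ
  have hconv : ConvexOn ℝ Set.univ φ := by
    have := hF.comp_affineMap (AffineMap.lineMap v z : ℝ →ᵃ[ℝ] _)
    convert this using 1
    · rfl
    · rfl
    · rfl
    · rfl
    · exact Set.preimage_univ.symm
    funext t
    simp [φ, Function.comp, AffineMap.lineMap_apply, add_comm]
  have hcurve : HasDerivAt (fun t : ℝ => v + t • (z - v)) (z - v) 0 := by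
    simpa using ((hasDerivAt_id (0:ℝ)).smul_const (z - v)).const_add v
  have hgrad : HasFDerivAt F (toDual ℝ _ (gradient F v)) v :=
    (hasGradientAt_iff_hasFDerivAt).mp ((hFd v).hasGradientAt)
  have hgrad' : HasFDerivAt F (toDual ℝ _ (gradient F v)) (v + (0:ℝ) • (z - v)) := by
    simpa using hgrad
  have hderiv : HasDerivAt φ (inner ℝ (gradient F v) (z - v)) 0 := by
    have := hgrad'.comp_hasDerivAt 0 hcurve
    rw [toDual_apply_apply] at this
    exact this
  have hslope := hconv.le_slope_of_hasDerivAt (Set.mem_univ 0) (Set.mem_univ 1)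
    zero_lt_one hderiv
  rw [slope_def_field] at hslope
  simp only [φ] at hslope
  simp only [one_smul, zero_smul, add_zero, add_sub_cancel] at hslope
  have : (F z - F v) / (1 - 0) = F z - F v := by norm_num
  linarith [hslope.trans_eq this]

theorem estimate_sequence_progress
    (d : ℕ)
    (F : EuclideanSpace ℝ (Fin d) → ℝ)
    (hF : ConvexOn ℝ Set.univ F)
    (hFd : Differentiable ℝ F)
    (x0 : EuclideanSpace ℝ (Fin d))
    (y : ℕ → EuclideanSpace ℝ (Fin d))
    (a : ℕ → ℝ) (ha : ∀ k, 1 ≤ k → 0 < a k)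
    (ψ : ℕ → EuclideanSpace ℝ (Fin d) → ℝ)
    (hψ0 : ∀ x, ψ 0 x = ‖x - x0‖ ^ 2 / 2)
    (hψ : ∀ k x, ψ (k + 1) x = ψ k x +
      a (k + 1) * (F (y (k + 1)) + inner ℝ (gradient F (y (k + 1))) (x - y (k + 1))))
    (k : ℕ)
    (xk : EuclideanSpace ℝ (Fin d))
    (hxk : xk = x0 - ∑ i ∈ Finset.Icc 1 k, a i • gradient F (y i))
    (Ak : ℝ) (hAk : Ak = ∑ i ∈ Finset.Icc 1 k, a i)
    (Ak1 : ℝ) (hAk1 : Ak1 = Ak + a (k + 1)) :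
    ∀ (x zk : EuclideanSpace ℝ (Fin d)),
      ψ (k + 1) x - Ak1 * F (y (k + 1)) - (ψ k xk - Ak * F zk) ≥
        Ak1 * inner ℝ (gradient F (y (k + 1)))
          ((a (k + 1) / Ak1) • x + (Ak / Ak1) • zk - y (k + 1))
        + ‖x - xk‖ ^ 2 / 2 := by
  intro x zk
  have hAknn : 0 ≤ Ak := by
    rw [hAk]
    exact Finset.sum_nonneg fun i hi => (ha i (Finset.mem_Icc.mp hi).1).le
  have hAk1pos : 0 < Ak1 := by
    rw [hAk1]; linarith [ha (k+1) (Nat.le_add_left 1 k)]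
  -- closed form of ψ
  have hclosed : ∀ n x', ψ n x' = ‖x' - x0‖ ^ 2 / 2 +
      ∑ i ∈ Finset.Icc 1 n, a i * (F (y i) + inner ℝ (gradient F (y i)) (x' - y i)) := by
    intro n
    induction n with
    | zero => intro x'; simp [hψ0]
    | succ m ih =>
      intro x'
      rw [hψ, ih, Finset.sum_Icc_succ_top (Nat.le_add_left 1 m)]
      ring
  -- quadratic identity: ψ k x - ψ k xk = ‖x - xk‖²/2
  have hquad : ψ k x - ψ k xk = ‖x - xk‖ ^ 2 / 2 := by
    have hx0k : x0 - xk = ∑ i ∈ Finset.Icc 1 k, a i • gradient F (y i) := by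
      rw [hxk]; abel
    have hsum : (∑ i ∈ Finset.Icc 1 k, a i * (F (y i) + inner ℝ (gradient F (y i)) (x - y i)))
        - (∑ i ∈ Finset.Icc 1 k, a i * (F (y i) + inner ℝ (gradient F (y i)) (xk - y i)))
        = (inner ℝ (x0 - xk) (x - xk) : ℝ) := by
      rw [hx0k, sum_inner, ← Finset.sum_sub_distrib]
      refine Finset.sum_congr rfl fun i _ => ?_
      rw [real_inner_smul_left]
      have h1 : (inner ℝ (gradient F (y i)) (x - xk) : ℝ)
          = inner ℝ (gradient F (y i)) (x - y i) - inner ℝ (gradient F (y i)) (xk - y i) := by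
        rw [← inner_sub_right]
        congr 1
        abel
      rw [h1]; ring
    have hn : ‖x - x0‖ ^ 2 = ‖x - xk‖ ^ 2 - 2 * inner ℝ (x - xk) (x0 - xk) + ‖x0 - xk‖ ^ 2 := by
      have : x - x0 = (x - xk) - (x0 - xk) := by abel
      rw [this, norm_sub_sq_real]
    have hn2 : ‖xk - x0‖ ^ 2 = ‖x0 - xk‖ ^ 2 := by
      rw [← norm_neg]; congr 1; abel
    have hcomm : (inner ℝ (x0 - xk) (x - xk) : ℝ) = inner ℝ (x - xk) (x0 - xk) :=
      real_inner_comm _ _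
    rw [hclosed k x, hclosed k xk]
    rw [show ∀ A B C D : ℝ, (A + B) - (C + D) = (A - C) + (B - D) by intros; ring]
    rw [hsum, hn, hn2, hcomm]
    ring
  -- convexity inequality at zk
  have hconvx : F (y (k+1)) + inner ℝ (gradient F (y (k+1))) (zk - y (k+1)) ≤ F zk :=
    grad_ineq F hF hFd (y (k+1)) zk
  -- expand the RHS inner product
  have hg := gradient F (y (k+1))
  have hinner : (inner ℝ (gradient F (y (k+1)))
        ((a (k + 1) / Ak1) • x + (Ak / Ak1) • zk - y (k + 1)) : ℝ)
      = (a (k+1) / Ak1) * inner ℝ (gradient F (y (k+1))) x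
        + (Ak / Ak1) * inner ℝ (gradient F (y (k+1))) zk
        - inner ℝ (gradient F (y (k+1))) (y (k+1)) := by
    rw [inner_sub_right, inner_add_right, real_inner_smul_right, real_inner_smul_right]
  have hix : (inner ℝ (gradient F (y (k+1))) (x - y (k+1)) : ℝ)
      = inner ℝ (gradient F (y (k+1))) x - inner ℝ (gradient F (y (k+1))) (y (k+1)) :=
    inner_sub_right _ _ _
  have hiz : (inner ℝ (gradient F (y (k+1))) (zk - y (k+1)) : ℝ)
      = inner ℝ (gradient F (y (k+1))) zk - inner ℝ (gradient F (y (k+1))) (y (k+1)) :=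
    inner_sub_right _ _ _
  rw [hψ k x, ge_iff_le, hinner]
  have hne : Ak1 ≠ 0 := ne_of_gt hAk1pos
  have hcvx' : Ak * (F (y (k+1)) + inner ℝ (gradient F (y (k+1))) (zk - y (k+1))) ≤ Ak * F zk :=
    mul_le_mul_of_nonneg_left hconvx hAknn
  rw [hiz] at hcvx'
  rw [hix]
  have key : ψ k x = ψ k xk + ‖x - xk‖ ^ 2 / 2 := by linarith [hquad]
  rw [key]
  set P := (inner ℝ (gradient F (y (k+1))) x : ℝ)
  set Q := (inner ℝ (gradient F (y (k+1))) zk : ℝ)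
  set R := (inner ℝ (gradient F (y (k+1))) (y (k+1)) : ℝ)
  have hmul : Ak1 * (a (k+1) / Ak1 * P + Ak / Ak1 * Q - R)
      = a (k+1) * P + Ak * Q - Ak1 * R := by
    field_simp
  rw [hmul]
  have hcvx2 : Ak * F (y (k+1)) + Ak * Q - Ak * R ≤ Ak * F zk := by nlinarith [hcvx']
  subst hAk1
  linarith [hcvx2]
end

section
/- Let λ_{k+1} > 0, y_{k+1}, x̃_k ∈ ℝ^d, and g, h ∈ ℝ^d with ‖g − h‖ ≤ (L_p/p!)‖y_{k+1} − x̃_k‖^p, and suppose h + (L_p(p+1)/p!)·(y_{k+1} − x̃_k)‖y_{k+1} − x̃_k‖^{p−1} = 0. If η := λ_{k+1} L_p ‖y_{k+1} − x̃_k‖^{p−1}/(p−1)! satisfies 1/2 ≤ η ≤ p/(p+1), then ‖y_{k+1} − (x̃_k − λ_{k+1} g)‖ ≤ ½ ‖y_{k+1} − x̃_k‖. -/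
theorem implicit_gradient_step_contraction
    (d p : ℕ) (hp : 1 ≤ p) (L lam : ℝ) (hL : 0 < L) (hlam : 0 < lam)
    (y1 xt g h : EuclideanSpace ℝ (Fin d))
    (hgh : ‖g - h‖ ≤ L / (p.factorial : ℝ) * ‖y1 - xt‖ ^ p)
    (hopt : h + ((L * (p + 1) / (p.factorial : ℝ)) * ‖y1 - xt‖ ^ (p - 1)) • (y1 - xt) = 0)
    (η : ℝ)
    (hη : η = lam * L * ‖y1 - xt‖ ^ (p - 1) / ((p - 1).factorial : ℝ))
    (hη1 : 1 / 2 ≤ η) (hη2 : η ≤ p / (p + 1)) :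
    ‖y1 - (xt - lam • g)‖ ≤ 1 / 2 * ‖y1 - xt‖ := by
  set r : EuclideanSpace ℝ (Fin d) := y1 - xt with hr
  set R : ℝ := ‖r‖ with hR
  have hRnn : 0 ≤ R := norm_nonneg r
  have hpR : (0:ℝ) < p := by exact_mod_cast hp
  have hfpos : (0:ℝ) < ((p-1).factorial : ℝ) := by exact_mod_cast (p-1).factorial_pos
  have hfact : (p.factorial : ℝ) = p * ((p-1).factorial : ℝ) := by
    obtain ⟨n, rfl⟩ : ∃ n, p = n + 1 := ⟨p - 1, by omega⟩
    simp [Nat.factorial_succ]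
  have hRp : R ^ p = R ^ (p-1) * R := by
    conv_lhs => rw [show p = (p-1)+1 by omega]
    rw [pow_succ]
  set c : ℝ := η * (p + 1) / p with hc
  have hlc : lam * (L * (p + 1) / (p.factorial : ℝ) * R ^ (p-1)) = c := by
    rw [hc, hη, hfact]; field_simp
  have hlamh : lam • h = -(c • r) := by
    have h1 : h = -(((L * (p + 1) / (p.factorial : ℝ)) * R ^ (p-1)) • r) := by
      have := hopt
      rw [add_eq_zero_iff_eq_neg] at this
      exact this
    rw [h1, smul_neg, smul_smul, hlc]
  have hdecomp : y1 - (xt - lam • g) = (1 - c) • r + lam • (g - h) := by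
    rw [hr] at hlamh ⊢
    rw [smul_sub lam g h, hlamh]
    module
  have hc1 : c ≤ 1 := by
    rw [hc, div_le_one hpR]
    have h1 : (0:ℝ) < p + 1 := by linarith
    rw [le_div_iff₀ h1] at hη2
    nlinarith
  have hterm2 : lam * (L / (p.factorial : ℝ) * R ^ p) = η / p * R := by
    rw [hη, hfact, hRp]; field_simp
  calc ‖y1 - (xt - lam • g)‖ = ‖(1 - c) • r + lam • (g - h)‖ := by rw [hdecomp]
    _ ≤ ‖(1 - c) • r‖ + ‖lam • (g - h)‖ := norm_add_le _ _
    _ = |1 - c| * R + |lam| * ‖g - h‖ := by rw [norm_smul, norm_smul, Real.norm_eq_abs, Real.norm_eq_abs]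
    _ ≤ (1 - c) * R + lam * (L / (p.factorial : ℝ) * R ^ p) := by
        gcongr
        · rw [abs_of_nonneg (by linarith)]
        · rw [abs_of_pos hlam]
    _ = (1 - c) * R + η / p * R := by rw [hterm2]
    _ ≤ 1 / 2 * R := by
        rw [hc]
        have : 1 - η * (p+1) / p + η / p = 1 - η := by field_simp; ring
        nlinarith [mul_nonneg (sub_nonneg.mpr hη1) hRnn]
end

section
/- Under the hypotheses of Theorem 3 (convex differentiable F, sequences (y_k), (λ_k), (a_k), (A_k) with λ_k A_k = a_k², x_k = x_0 − Σ_{i=1}^k a_i ∇F(y_i), x̃_k = (a_{k+1}/A_{k+1})x_k + (A_k/A_{k+1})y_k, and the approximation condition ‖y_{k+1} − (x̃_k − λ_{k+1}∇F(y_{k+1}))‖ ≤ σ‖y_{k+1} − x̃_k‖ for some σ ∈ [0,1)), for every x ∈ ℝ^d and every k ≥ 1: F(y_k) − F(x) ≤ 2‖x − x_0‖² / (Σ_{i=1}^k √λ_i)². -/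
open Finset
open scoped RealInnerProductSpace

private lemma step_approx_nonpos {E : Type*} [NormedAddCommGroup E] [InnerProductSpace ℝ E]
    (v g : E) (ll σ : ℝ) (hll : 0 < ll) (hσ0 : 0 ≤ σ) (hσ1 : σ < 1)
    (happ : ‖v + ll • g‖ ≤ σ * ‖v‖) :
    ⟪g, v⟫ + ll * ‖g‖ ^ 2 / 2 ≤ 0 := by
  have hexp : ‖v + ll • g‖ ^ 2 = ‖v‖ ^ 2 + 2 * (ll * ⟪g, v⟫) + ll ^ 2 * ‖g‖ ^ 2 := by
    rw [norm_add_sq_real, real_inner_smul_right, norm_smul, Real.norm_eq_abs,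
      abs_of_pos hll, mul_pow, real_inner_comm]
  set P := ⟪g, v⟫ with hP
  set N := ‖g‖ with hN
  set V := ‖v‖ with hV
  set W := ‖v + ll • g‖ with hW
  have hWnn : 0 ≤ W := norm_nonneg _
  have hVnn : 0 ≤ V := norm_nonneg _
  have hσ2 : σ ^ 2 ≤ 1 := by nlinarith
  have hW2 : W ^ 2 ≤ V ^ 2 := by nlinarith [sq_nonneg V]
  nlinarith [hll, sq_nonneg N, sq_nonneg V]

private lemma step_lemma {E : Type*} [NormedAddCommGroup E] [InnerProductSpace ℝ E]
    (z xk xk1 yk yk1 xtk g : E) (Fyk Fyk1 Fz Ak Ak1 aa ll σ : ℝ)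
    (hAk1 : 0 < Ak1) (hll : 0 < ll) (haa : 0 < aa) (hAkn : 0 ≤ Ak)
    (hAs : Ak1 = Ak + aa) (hcoup : ll * Ak1 = aa ^ 2)
    (hxk1 : xk1 = xk - aa • g)
    (hxtk : Ak1 • xtk = aa • xk + Ak • yk)
    (h1 : Fyk1 + ⟪g, z - yk1⟫ ≤ Fz)
    (h2 : Fyk1 + ⟪g, yk - yk1⟫ ≤ Fyk)
    (happ : ‖yk1 - (xtk - ll • g)‖ ≤ σ * ‖yk1 - xtk‖)
    (hσ0 : 0 ≤ σ) (hσ1 : σ < 1) :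
    Ak1 * (Fyk1 - Fz) + ‖xk1 - z‖ ^ 2 / 2 ≤ Ak * (Fyk - Fz) + ‖xk - z‖ ^ 2 / 2 := by
  have ee1 : ⟪g, z - yk1⟫ = ⟪g, z⟫ - ⟪g, yk1⟫ := inner_sub_right _ _ _
  have ee2 : ⟪g, yk - yk1⟫ = ⟪g, yk⟫ - ⟪g, yk1⟫ := inner_sub_right _ _ _
  rw [ee1] at h1
  rw [ee2] at h2
  have e1 : ‖xk1 - z‖ ^ 2 = ‖xk - z‖ ^ 2 - 2 * (aa * ⟪g, xk - z⟫) + aa ^ 2 * ‖g‖ ^ 2 := by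
    have hre : xk1 - z = (xk - z) - aa • g := by rw [hxk1]; abel
    rw [hre, norm_sub_sq_real, real_inner_smul_right, norm_smul, Real.norm_eq_abs,
      abs_of_pos haa, mul_pow, real_inner_comm]
  have hv : Ak1 • yk1 - Ak • yk - aa • z = Ak1 • (yk1 - xtk) + aa • (xk - z) := by
    rw [smul_sub, smul_sub, hxtk]; abel
  have e2 : Ak1 * ⟪g, yk1 - xtk⟫ + aa * ⟪g, xk - z⟫
      = Ak1 * ⟪g, yk1⟫ - Ak * ⟪g, yk⟫ - aa * ⟪g, z⟫ := by
    have h : Ak1 * ⟪g, yk1 - xtk⟫ + aa * ⟪g, xk - z⟫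
        = ⟪g, Ak1 • (yk1 - xtk) + aa • (xk - z)⟫ := by
      rw [inner_add_right, real_inner_smul_right, real_inner_smul_right]
    rw [h, ← hv, inner_sub_right, inner_sub_right, real_inner_smul_right,
      real_inner_smul_right, real_inner_smul_right]
  have happ' : ‖(yk1 - xtk) + ll • g‖ ≤ σ * ‖yk1 - xtk‖ := by
    have hvw : yk1 - (xtk - ll • g) = (yk1 - xtk) + ll • g := by abel
    rwa [hvw] at happ
  have e3 : ⟪g, yk1 - xtk⟫ + ll * ‖g‖ ^ 2 / 2 ≤ 0 :=
    step_approx_nonpos _ _ _ _ hll hσ0 hσ1 happ'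
  have e3' : Ak1 * (⟪g, yk1 - xtk⟫ + ll * ‖g‖ ^ 2 / 2) ≤ 0 := by
    have h := mul_le_mul_of_nonneg_left e3 hAk1.le
    simpa using h
  have hc2 : Ak1 * (ll * ‖g‖ ^ 2 / 2) = aa ^ 2 * ‖g‖ ^ 2 / 2 := by
    rw [← hcoup]; ring
  have hm1 := mul_le_mul_of_nonneg_left h1 haa.le
  have hm2 := mul_le_mul_of_nonneg_left h2 hAkn
  rw [hAs] at e2 e3' hc2 ⊢
  linarith [hm1, hm2, e3', hc2, e1, e2]

lemma grad_convex_ineq {d : ℕ} (F : EuclideanSpace ℝ (Fin d) → ℝ)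
    (hF : ConvexOn ℝ Set.univ F) (hFd : Differentiable ℝ F)
    (u v : EuclideanSpace ℝ (Fin d)) :
    F u + ⟪gradient F u, v - u⟫ ≤ F v := by
  set c := v - u with hc
  have hgrad : HasFDerivAt F (InnerProductSpace.toDual ℝ _ (gradient F u)) u :=
    (hFd u).hasGradientAt.hasFDerivAt
  have hline : HasDerivAt (fun t : ℝ => t • c + u) c 0 := by
    simpa using ((hasDerivAt_id (0 : ℝ)).smul_const c).add_const u
  have hcomp : HasDerivAt (fun t : ℝ => F (t • c + u)) ⟪gradient F u, c⟫ 0 := by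
    have h := HasFDerivAt.comp_hasDerivAt (x := (0 : ℝ)) (by simpa using hgrad) hline
    simpa [InnerProductSpace.toDual_apply_apply, Function.comp_def] using h
  have hconv : ConvexOn ℝ Set.univ (fun t : ℝ => F (t • c + u)) := by
    have h := hF.comp_affineMap (AffineMap.lineMap u v)
    have heq : (F ∘ (AffineMap.lineMap u v : ℝ →ᵃ[ℝ] _)) = fun t : ℝ => F (t • c + u) := by
      funext t
      simp [AffineMap.lineMap_apply, hc]
    rw [heq] at h
    simpa using h
  have hs := hconv.le_slope_of_hasDerivAt (Set.mem_univ (0 : ℝ)) (Set.mem_univ (1 : ℝ))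
    one_pos hcomp
  rw [slope_def_field] at hs
  have h1 : (1 : ℝ) • c + u = v := by simp [hc]
  have h0 : (0 : ℝ) • c + u = u := by simp
  rw [h1, h0] at hs
  simp only [sub_zero, div_one] at hs
  linarith

theorem accelerated_meta_algorithm_rate
    (d : ℕ)
    (F : EuclideanSpace ℝ (Fin d) → ℝ)
    (hF : ConvexOn ℝ Set.univ F)
    (hFd : Differentiable ℝ F)
    (x0 : EuclideanSpace ℝ (Fin d))
    (y : ℕ → EuclideanSpace ℝ (Fin d))
    (lam a A : ℕ → ℝ)
    (hlam : ∀ i, 1 ≤ i → 0 < lam i)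
    (hapos : ∀ i, 1 ≤ i → 0 < a i)
    (hA : ∀ k, A k = ∑ i ∈ Finset.Icc 1 k, a i)
    (hcoupling : ∀ k, 1 ≤ k → lam k * A k = a k ^ 2)
    (x : ℕ → EuclideanSpace ℝ (Fin d))
    (hx : ∀ k, x k = x0 - ∑ i ∈ Finset.Icc 1 k, a i • gradient F (y i))
    (xt : ℕ → EuclideanSpace ℝ (Fin d))
    (hxt : ∀ k, xt k = (a (k + 1) / A (k + 1)) • x k + (A k / A (k + 1)) • y k)
    (σ : ℝ) (hσ0 : 0 ≤ σ) (hσ1 : σ < 1)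
    (happrox : ∀ k, ‖y (k + 1) - (xt k - lam (k + 1) • gradient F (y (k + 1)))‖
      ≤ σ * ‖y (k + 1) - xt k‖) :
    ∀ (z : EuclideanSpace ℝ (Fin d)) (k : ℕ), 1 ≤ k →
      F (y k) - F z ≤ 2 * ‖z - x0‖ ^ 2 / (∑ i ∈ Finset.Icc 1 k, Real.sqrt (lam i)) ^ 2 := by
  have hA0 : A 0 = 0 := by simp [hA]
  have hx0 : x 0 = x0 := by simp [hx]
  have hAsucc : ∀ k, A (k + 1) = A k + a (k + 1) := by
    intro k
    rw [hA, hA, Finset.sum_Icc_succ_top (by omega : 1 ≤ k + 1)]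
  have hApos : ∀ k, 1 ≤ k → 0 < A k := by
    intro k hk
    rw [hA]
    exact Finset.sum_pos (fun i hi => hapos i (Finset.mem_Icc.mp hi).1)
      ⟨1, Finset.mem_Icc.mpr ⟨le_refl 1, hk⟩⟩
  have hAnn : ∀ k, 0 ≤ A k := by
    intro k
    rcases Nat.eq_zero_or_pos k with h | h
    · simp [h, hA0]
    · exact (hApos k h).le
  have hxsucc : ∀ k, x (k + 1) = x k - a (k + 1) • gradient F (y (k + 1)) := by
    intro k
    rw [hx, hx, Finset.sum_Icc_succ_top (by omega : 1 ≤ k + 1)]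
    abel
  intro z k hk
  have key : ∀ k, A (k + 1) * (F (y (k + 1)) - F z) + ‖x (k + 1) - z‖ ^ 2 / 2
      ≤ A k * (F (y k) - F z) + ‖x k - z‖ ^ 2 / 2 := by
    intro k
    have hAk1 : 0 < A (k + 1) := hApos (k + 1) (by omega)
    have hAne : A (k + 1) ≠ 0 := ne_of_gt hAk1
    have hxtk : A (k + 1) • xt k = a (k + 1) • x k + A k • y k := by
      have c1 : A (k + 1) * (a (k + 1) / A (k + 1)) = a (k + 1) := by field_simp
      have c2 : A (k + 1) * (A k / A (k + 1)) = A k := by field_simp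
      rw [hxt k, smul_add, smul_smul, smul_smul, c1, c2]
    exact step_lemma z (x k) (x (k + 1)) (y k) (y (k + 1)) (xt k)
      (gradient F (y (k + 1))) (F (y k)) (F (y (k + 1))) (F z)
      (A k) (A (k + 1)) (a (k + 1)) (lam (k + 1)) σ
      hAk1 (hlam (k + 1) (by omega)) (hapos (k + 1) (by omega)) (hAnn k)
      (hAsucc k) (hcoupling (k + 1) (by omega)) (hxsucc k) hxtk
      (grad_convex_ineq F hF hFd _ _) (grad_convex_ineq F hF hFd _ _)
      (happrox k) hσ0 hσ1
  have mono : ∀ k, A k * (F (y k) - F z) + ‖x k - z‖ ^ 2 / 2 ≤ ‖x0 - z‖ ^ 2 / 2 := by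
    intro k
    induction k with
    | zero => simp [hA0, hx0]
    | succ n ih => exact le_trans (key n) ih
  have hsq : ∀ k, (∑ i ∈ Finset.Icc 1 k, Real.sqrt (lam i)) ≤ 2 * Real.sqrt (A k) := by
    intro k
    induction k with
    | zero => simp [hA0]
    | succ n ih =>
      rw [Finset.sum_Icc_succ_top (by omega : 1 ≤ n + 1)]
      set s := Real.sqrt (A n) with hsdef
      set t := Real.sqrt (A (n + 1)) with htdef
      have hApos' : 0 < A (n + 1) := hApos _ (by omega)
      have ht : t ^ 2 = A (n + 1) := Real.sq_sqrt hApos'.le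
      have hs : s ^ 2 = A n := Real.sq_sqrt (hAnn n)
      have htpos : 0 < t := Real.sqrt_pos.mpr hApos'
      have hsnn : 0 ≤ s := Real.sqrt_nonneg _
      have hlam' : Real.sqrt (lam (n + 1)) * t = a (n + 1) := by
        rw [htdef, ← Real.sqrt_mul (hlam _ (by omega)).le, hcoupling (n + 1) (by omega),
          Real.sqrt_sq (hapos _ (by omega)).le]
      have ha' : a (n + 1) = t ^ 2 - s ^ 2 := by rw [ht, hs, hAsucc n]; ring
      nlinarith [sq_nonneg (t - s), ih, Real.sqrt_nonneg (lam (n + 1)), htpos, hlam', ha']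
  have hAk : 0 < A k := hApos k hk
  have hSk : 0 < ∑ i ∈ Finset.Icc 1 k, Real.sqrt (lam i) :=
    Finset.sum_pos (fun i hi => Real.sqrt_pos.mpr (hlam i (Finset.mem_Icc.mp hi).1))
      ⟨1, Finset.mem_Icc.mpr ⟨le_refl 1, hk⟩⟩
  have hS2 : (∑ i ∈ Finset.Icc 1 k, Real.sqrt (lam i)) ^ 2 ≤ 4 * A k := by
    have h2 := hsq k
    have h3 := Real.sq_sqrt hAk.le
    nlinarith [Real.sqrt_nonneg (A k), hSk]
  have hF1 : A k * (F (y k) - F z) ≤ ‖x0 - z‖ ^ 2 / 2 := by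
    have hm := mono k
    have hxz : (0 : ℝ) ≤ ‖x k - z‖ ^ 2 := sq_nonneg _
    linarith
  have hnz : ‖z - x0‖ ^ 2 = ‖x0 - z‖ ^ 2 := by rw [norm_sub_rev]
  rw [le_div_iff₀ (by positivity)]
  rcases le_or_gt (F (y k) - F z) 0 with hD | hD
  · have hle : (F (y k) - F z) * (∑ i ∈ Finset.Icc 1 k, Real.sqrt (lam i)) ^ 2 ≤ 0 :=
      mul_nonpos_of_nonpos_of_nonneg hD (sq_nonneg _)
    have hpos : (0 : ℝ) ≤ 2 * ‖z - x0‖ ^ 2 := by positivity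
    linarith
  · have hmm := mul_le_mul_of_nonneg_left hS2 hD.le
    linarith [hF1, hnz, hmm]
end

section
/- In the setting above, the function g(x) = max_y {G(x,y) − h(y)} is differentiable with ∇g(x) = ∇_x G(x, y*(x)), and ∇g is Lipschitz with constant L_g = L_G + 2L_G²/μ_y. -/
open Set Filter InnerProductSpace Topology

variable {E : Type*} [NormedAddCommGroup E] [InnerProductSpace ℝ E] [CompleteSpace E]

/-- first-order lower bound for strongly convex functions -/
lemma aux_first_order {m : ℝ} {f : E → ℝ} (hf : StrongConvexOn Set.univ m f)
    {a b fa : E} (ha : HasGradientAt f fa a) :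
    f a + ⟪fa, b - a⟫_ℝ + m / 2 * ‖b - a‖ ^ 2 ≤ f b := by
  set q : ℝ → ℝ := fun t => f (a + t • (b - a)) with hq
  have hc : HasDerivAt (fun t : ℝ => a + t • (b - a)) (b - a) 0 := by
    simpa using ((hasDerivAt_id (0:ℝ)).smul_const (b - a)).const_add a
  have hd : HasDerivAt q (⟪fa, b - a⟫_ℝ) 0 := by
    have ha' : HasFDerivAt f ((toDual ℝ E) fa) (a + (0:ℝ) • (b - a)) := by
      simpa using ha.hasFDerivAt
    have := ha'.comp_hasDerivAt (x := (0:ℝ)) hc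
    simpa [hq, toDual_apply_apply, add_comm, Function.comp_def] using this
  have hslope : Tendsto (slope q 0) (𝓝[>] 0) (𝓝 (⟪fa, b - a⟫_ℝ)) :=
    (hasDerivAt_iff_tendsto_slope.1 hd).mono_left
      (nhdsWithin_mono 0 (fun t ht => ne_of_gt ht))
  have hrhs : Tendsto (fun t : ℝ => f b - f a - (1 - t) * (m / 2 * ‖b - a‖ ^ 2))
      (𝓝[>] 0) (𝓝 (f b - f a - m / 2 * ‖b - a‖ ^ 2)) := by
    have : Tendsto (fun t : ℝ => f b - f a - (1 - t) * (m / 2 * ‖b - a‖ ^ 2))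
        (𝓝 0) (𝓝 (f b - f a - (1 - 0) * (m / 2 * ‖b - a‖ ^ 2))) := by
      exact (tendsto_const_nhds.sub (((tendsto_const_nhds.sub tendsto_id).mul tendsto_const_nhds)))
    simpa using this.mono_left nhdsWithin_le_nhds
  have key : ⟪fa, b - a⟫_ℝ ≤ f b - f a - m / 2 * ‖b - a‖ ^ 2 := by
    refine le_of_tendsto_of_tendsto hslope hrhs ?_
    filter_upwards [Ioo_mem_nhdsGT_of_mem ⟨le_refl (0:ℝ), zero_lt_one⟩] with t ht
    rcases ht with ⟨ht0, ht1⟩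
    have hcomb := hf.2 (Set.mem_univ b) (Set.mem_univ a) ht0.le
      (by linarith : (0:ℝ) ≤ 1 - t) (by ring)
    have hpt : a + t • (b - a) = t • b + (1 - t) • a := by module
    have hq0 : q 0 = f a := by simp [hq]
    have hqt : q t ≤ t * f b + (1 - t) * f a - t * (1 - t) * (m / 2 * ‖b - a‖ ^ 2) := by
      simpa [hq, hpt, smul_eq_mul] using hcomb
    rw [slope_def_field]
    rw [div_le_iff₀ (by simpa using ht0)]
    have : (t : ℝ) - 0 = t := by ring
    rw [this, hq0]
    nlinarith [hqt]
  linarith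

lemma aux_sq_le {a b : ℝ} (ha : 0 ≤ a) (hb : 0 ≤ b) (h : a ^ 2 ≤ b ^ 2) : a ≤ b := by
  nlinarith

/-- descent-type quadratic bound from Lipschitz gradient -/
lemma aux_descent {f : E → ℝ} {gr : E → E} (hf : ∀ u, HasGradientAt f (gr u) u)
    {L : ℝ} (hL : 0 ≤ L) (hlip : ∀ u v, ‖gr u - gr v‖ ≤ L * ‖u - v‖) (u v : E) :
    |f v - f u - ⟪gr u, v - u⟫_ℝ| ≤ L * ‖v - u‖ * ‖v - u‖ := by
  have hseg : ∀ z ∈ segment ℝ u v, ‖z - u‖ ≤ ‖v - u‖ := by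
    rintro z ⟨ta, tb, hta, htb, hsum, rfl⟩
    have hta' : ta = 1 - tb := by linarith
    subst hta'
    have hzz : (1 - tb) • u + tb • v - u = tb • (v - u) := by module
    rw [hzz, norm_smul, Real.norm_eq_abs, abs_of_nonneg htb]
    nlinarith [norm_nonneg (v - u)]
  have := Convex.norm_image_sub_le_of_norm_hasFDerivWithin_le'
    (f := f) (f' := fun z => toDual ℝ E (gr z)) (φ := toDual ℝ E (gr u))
    (s := segment ℝ u v) (C := L * ‖v - u‖)
    (fun z _ => (hf z).hasFDerivAt.hasFDerivWithinAt)
    (fun z hz => by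
      rw [← map_sub, LinearIsometryEquiv.norm_map]
      exact le_trans (hlip z u) (mul_le_mul_of_nonneg_left (hseg z hz) hL))
    (convex_segment u v) (left_mem_segment ℝ u v) (right_mem_segment ℝ u v)
  rw [toDual_apply_apply] at this
  calc |f v - f u - ⟪gr u, v - u⟫_ℝ| = ‖f v - f u - ⟪gr u, v - u⟫_ℝ‖ := rfl
    _ ≤ L * ‖v - u‖ * ‖v - u‖ := this


set_option maxHeartbeats 2000000 in
theorem max_function_smooth
    (dx dy : ℕ) (μx μy LG : ℝ) (hμx : 0 < μx) (hμy : 0 < μy) (hLG : 0 ≤ LG)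
    (f : EuclideanSpace ℝ (Fin dx) → ℝ)
    (h : EuclideanSpace ℝ (Fin dy) → ℝ)
    (G : EuclideanSpace ℝ (Fin dx) → EuclideanSpace ℝ (Fin dy) → ℝ)
    (hfd : Differentiable ℝ f) (hhd : Differentiable ℝ h)
    (hGx : ∀ y, Differentiable ℝ (fun x => G x y))
    (hGy : ∀ x, Differentiable ℝ (G x))
    (hscx : ∀ y, StrongConvexOn Set.univ μx (fun x => f x + G x y))
    (hscy : ∀ x, StrongConcaveOn Set.univ μy (fun y => G x y - h y))
    (gx : EuclideanSpace ℝ (Fin dx) → EuclideanSpace ℝ (Fin dy) → EuclideanSpace ℝ (Fin dx))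
    (gy : EuclideanSpace ℝ (Fin dx) → EuclideanSpace ℝ (Fin dy) → EuclideanSpace ℝ (Fin dy))
    (hgx : ∀ x y, gx x y = gradient (fun x' => G x' y) x)
    (hgy : ∀ x y, gy x y = gradient (G x) y)
    (hLip : ∀ x1 y1 x2 y2,
      ‖gx x1 y1 - gx x2 y2‖ ^ 2 + ‖gy x1 y1 - gy x2 y2‖ ^ 2
        ≤ LG ^ 2 * (‖x1 - x2‖ ^ 2 + ‖y1 - y2‖ ^ 2))
    (ystar : EuclideanSpace ℝ (Fin dx) → EuclideanSpace ℝ (Fin dy))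
    (hmax : ∀ x y, G x y - h y ≤ G x (ystar x) - h (ystar x))
    (g : EuclideanSpace ℝ (Fin dx) → ℝ)
    (hg : ∀ x, g x = G x (ystar x) - h (ystar x)) :
    (∀ x, HasGradientAt g (gx x (ystar x)) x) ∧
      ∀ x1 x2, ‖gx x1 (ystar x1) - gx x2 (ystar x2)‖
        ≤ (LG + 2 * LG ^ 2 / μy) * ‖x1 - x2‖ := by
  -- gradient facts
  have hgxgrad : ∀ x y, HasGradientAt (fun x' => G x' y) (gx x y) x := by
    intro x y; rw [hgx]; exact ((hGx y) x).hasGradientAt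
  -- componentwise Lipschitz bounds
  have hgxlipx : ∀ y u v, ‖gx u y - gx v y‖ ≤ LG * ‖u - v‖ := by
    intro y u v
    refine aux_sq_le (norm_nonneg _) (mul_nonneg hLG (norm_nonneg _)) ?_
    have h0 := hLip u y v y
    simp only [sub_self, norm_zero] at h0
    nlinarith [sq_nonneg ‖gy u y - gy v y‖]
  have hgxlipy : ∀ x y y', ‖gx x y - gx x y'‖ ≤ LG * ‖y - y'‖ := by
    intro x y y'
    refine aux_sq_le (norm_nonneg _) (mul_nonneg hLG (norm_nonneg _)) ?_
    have h0 := hLip x y x y'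
    simp only [sub_self, norm_zero] at h0
    nlinarith [sq_nonneg ‖gy x y - gy x y'‖]
  have hgylipx : ∀ y u v, ‖gy u y - gy v y‖ ≤ LG * ‖u - v‖ := by
    intro y u v
    refine aux_sq_le (norm_nonneg _) (mul_nonneg hLG (norm_nonneg _)) ?_
    have h0 := hLip u y v y
    simp only [sub_self, norm_zero] at h0
    nlinarith [sq_nonneg ‖gx u y - gx v y‖]
  -- stationarity of the maximizer
  have hstat : ∀ x, gy x (ystar x) = gradient h (ystar x) := by
    intro x
    have hloc : IsLocalMax (fun y => G x y - h y) (ystar x) :=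
      Filter.Eventually.of_forall (fun y => hmax x y)
    have hdiff : HasFDerivAt (fun y => G x y - h y)
        (fderiv ℝ (G x) (ystar x) - fderiv ℝ h (ystar x)) (ystar x) :=
      ((hGy x) (ystar x)).hasFDerivAt.sub (hhd (ystar x)).hasFDerivAt
    have h0 := hloc.hasFDerivAt_eq_zero hdiff
    have heq : fderiv ℝ (G x) (ystar x) = fderiv ℝ h (ystar x) := sub_eq_zero.mp h0
    rw [hgy]; unfold gradient; rw [heq]
  -- Lipschitz continuity of the maximizer
  have hylip : ∀ x1 x2, μy * ‖ystar x1 - ystar x2‖ ≤ LG * ‖x1 - x2‖ := by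
    intro x1 x2
    set y1 := ystar x1
    set y2 := ystar x2
    have hsc : StrongConvexOn Set.univ μy (fun y => h y - G x1 y) := by
      have hneg := (hscy x1).neg
      have heq : (-(fun y => G x1 y - h y) : EuclideanSpace ℝ (Fin dy) → ℝ)
          = fun y => h y - G x1 y := by funext y; simp [neg_sub]
      rwa [heq] at hneg
    have hψg : ∀ x' y, HasGradientAt (fun y' => h y' - G x' y')
        (gradient h y - gy x' y) y := by
      intro x' y
      have hfd' : HasFDerivAt (fun y' => h y' - G x' y')
          (fderiv ℝ h y - fderiv ℝ (G x') y) y :=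
        (hhd y).hasFDerivAt.sub ((hGy x') y).hasFDerivAt
      rw [hasGradientAt_iff_hasFDerivAt, hgy, map_sub]
      unfold gradient
      rw [LinearIsometryEquiv.apply_symm_apply, LinearIsometryEquiv.apply_symm_apply]
      exact hfd'
    have h1 := aux_first_order hsc (a := y1) (b := y2) (hψg x1 y1)
    have h2 := aux_first_order hsc (a := y2) (b := y1) (hψg x1 y2)
    have hp1 : gradient h y1 - gy x1 y1 = 0 := by rw [hstat x1]; exact sub_self _
    have hp2 : gradient h y2 - gy x1 y2 = gy x2 y2 - gy x1 y2 := by rw [hstat x2]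
    rw [hp1] at h1
    rw [hp2] at h2
    simp only [inner_zero_left] at h1
    have hnrev : ‖y2 - y1‖ = ‖y1 - y2‖ := norm_sub_rev _ _
    rw [hnrev] at h1
    -- h1 : (h y1 - G x1 y1) + 0 + μy/2 * ‖y1 - y2‖^2 ≤ h y2 - G x1 y2
    -- h2 : (h y2 - G x1 y2) + ⟪gy x2 y2 - gy x1 y2, y1 - y2⟫ + μy/2 * ‖y1 - y2‖^2 ≤ h y1 - G x1 y1
    have hsum : ⟪gy x2 y2 - gy x1 y2, y1 - y2⟫_ℝ + μy * ‖y1 - y2‖ ^ 2 ≤ 0 := by linarith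
    have hcs : ⟪gy x1 y2 - gy x2 y2, y1 - y2⟫_ℝ ≤ ‖gy x1 y2 - gy x2 y2‖ * ‖y1 - y2‖ :=
      real_inner_le_norm _ _
    have hflip : ⟪gy x1 y2 - gy x2 y2, y1 - y2⟫_ℝ = -⟪gy x2 y2 - gy x1 y2, y1 - y2⟫_ℝ := by
      rw [← inner_neg_left]; congr 1; abel
    have hlipgy : ‖gy x1 y2 - gy x2 y2‖ ≤ LG * ‖x1 - x2‖ := hgylipx y2 x1 x2
    have hkey : μy * ‖y1 - y2‖ ^ 2 ≤ LG * ‖x1 - x2‖ * ‖y1 - y2‖ := by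
      have := hcs
      rw [hflip] at this
      nlinarith [mul_le_mul_of_nonneg_right hlipgy (norm_nonneg (y1 - y2))]
    rcases eq_or_lt_of_le (norm_nonneg (y1 - y2)) with h0 | h0
    · rw [← h0]
      have : μy * 0 = 0 := mul_zero μy
      rw [this]
      positivity
    · nlinarith [hkey]
  constructor
  · -- differentiability via Danskin sandwich
    intro x0
    set p := gx x0 (ystar x0) with hp
    have hquad : ∀ x, |g x - g x0 - ⟪p, x - x0⟫_ℝ|
        ≤ (LG + LG ^ 2 / μy) * ‖x - x0‖ ^ 2 := by
      intro x
      set yx := ystar x with hyx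
      set D := ‖x - x0‖ with hD
      have hDnn : 0 ≤ D := norm_nonneg _
      have hDD : D * D = D ^ 2 := by ring
      have hpos : 0 ≤ LG ^ 2 / μy * D ^ 2 := by positivity
      have A1 : |G x (ystar x0) - G x0 (ystar x0) - ⟪p, x - x0⟫_ℝ| ≤ LG * D * D :=
        aux_descent (f := fun x' => G x' (ystar x0)) (gr := fun x' => gx x' (ystar x0))
          (fun u => hgxgrad u (ystar x0)) hLG (fun u v => hgxlipx (ystar x0) u v) x0 x
      have A2 : |G x yx - G x0 yx - ⟪gx x0 yx, x - x0⟫_ℝ| ≤ LG * D * D :=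
        aux_descent (f := fun x' => G x' yx) (gr := fun x' => gx x' yx)
          (fun u => hgxgrad u yx) hLG (fun u v => hgxlipx yx u v) x0 x
      have A3 : ⟪gx x0 yx, x - x0⟫_ℝ - ⟪p, x - x0⟫_ℝ ≤ LG * ‖yx - ystar x0‖ * D := by
        have hin : ⟪gx x0 yx, x - x0⟫_ℝ - ⟪p, x - x0⟫_ℝ = ⟪gx x0 yx - p, x - x0⟫_ℝ :=
          (inner_sub_left _ _ _).symm
        rw [hin]
        refine le_trans (real_inner_le_norm _ _) ?_
        exact mul_le_mul_of_nonneg_right (hgxlipy x0 yx (ystar x0)) hDnn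
      have A4 : μy * ‖yx - ystar x0‖ ≤ LG * D := hylip x x0
      have hkey : LG * ‖yx - ystar x0‖ * D ≤ LG ^ 2 / μy * D ^ 2 := by
        rw [div_mul_eq_mul_div, le_div_iff₀ hμy]
        nlinarith [mul_le_mul_of_nonneg_left A4 (mul_nonneg hLG hDnn)]
      have hl1 : G x (ystar x0) - h (ystar x0) ≤ g x := by rw [hg x]; exact hmax x (ystar x0)
      have hu0 : G x0 yx - h yx ≤ g x0 := by rw [hg x0]; exact hmax x0 yx
      have hgx0 : g x0 = G x0 (ystar x0) - h (ystar x0) := hg x0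
      have hgxx : g x = G x yx - h yx := hg x
      have hCD : (LG + LG ^ 2 / μy) * D ^ 2 = LG * D ^ 2 + LG ^ 2 / μy * D ^ 2 := by ring
      rw [abs_le] at A1 A2 ⊢
      constructor
      · linarith [A1.1, hl1, hgx0, hDD, hpos, hCD]
      · linarith [A2.2, A3, hkey, hu0, hgxx, hDD, hCD]
    have hfd' : HasFDerivAt g (toDual ℝ _ p) x0 := by
      rw [hasFDerivAt_iff_isLittleO_nhds_zero, Asymptotics.isLittleO_iff]
      intro c hc
      set C := LG + LG ^ 2 / μy with hC
      have hCnn : 0 ≤ C := by positivity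
      have hδ : 0 < c / (C + 1) := by positivity
      filter_upwards [Metric.ball_mem_nhds (0 : EuclideanSpace ℝ (Fin dx)) hδ] with v hv
      have hvn : ‖v‖ < c / (C + 1) := by rwa [Metric.mem_ball, dist_zero_right] at hv
      have hq := hquad (x0 + v)
      have hsub : x0 + v - x0 = v := by abel
      rw [hsub] at hq
      rw [toDual_apply_apply, Real.norm_eq_abs]
      have h1 : C * ‖v‖ ^ 2 ≤ c * ‖v‖ := by
        calc C * ‖v‖ ^ 2 ≤ (C + 1) * ‖v‖ * ‖v‖ := by nlinarith [sq_nonneg ‖v‖, norm_nonneg v]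
          _ ≤ (C + 1) * (c / (C + 1)) * ‖v‖ := by
              refine mul_le_mul_of_nonneg_right ?_ (norm_nonneg v)
              exact mul_le_mul_of_nonneg_left hvn.le (by positivity)
          _ = c * ‖v‖ := by field_simp
      calc |g (x0 + v) - g x0 - ⟪p, v⟫_ℝ| ≤ C * ‖v‖ ^ 2 := hq
        _ ≤ c * ‖v‖ := h1
    exact hasGradientAt_iff_hasFDerivAt.2 hfd'
  · -- Lipschitz bound for the composite gradient
    intro x1 x2
    refine aux_sq_le (norm_nonneg _)
      (mul_nonneg (by positivity) (norm_nonneg _)) ?_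
    have hx := hLip x1 (ystar x1) x2 (ystar x2)
    have hy := hylip x1 x2
    set D := ‖x1 - x2‖
    set Yn := ‖ystar x1 - ystar x2‖
    set K := LG ^ 2 / μy with hKdef
    have hK : K * μy = LG ^ 2 := by rw [hKdef]; exact div_mul_cancel₀ _ hμy.ne'
    have hKnn : 0 ≤ K := by positivity
    have hDnn : 0 ≤ D := norm_nonneg _
    have hYnn : 0 ≤ Yn := norm_nonneg _
    have hsq : μy ^ 2 * Yn ^ 2 ≤ LG ^ 2 * D ^ 2 := by
      nlinarith [mul_self_le_mul_self (mul_nonneg hμy.le hYnn) hy]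
    have hY2 : LG ^ 2 * Yn ^ 2 ≤ K ^ 2 * D ^ 2 := by
      have hstep : μy ^ 2 * (LG ^ 2 * Yn ^ 2) ≤ μy ^ 2 * (K ^ 2 * D ^ 2) := by
        calc μy ^ 2 * (LG ^ 2 * Yn ^ 2) = LG ^ 2 * (μy ^ 2 * Yn ^ 2) := by ring
          _ ≤ LG ^ 2 * (LG ^ 2 * D ^ 2) := mul_le_mul_of_nonneg_left hsq (sq_nonneg LG)
          _ = μy ^ 2 * (K ^ 2 * D ^ 2) := by rw [← hK]; ring
      exact le_of_mul_le_mul_left hstep (by positivity)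
    have hgoal : ‖gx x1 (ystar x1) - gx x2 (ystar x2)‖ ^ 2
        ≤ (LG + 2 * K) ^ 2 * D ^ 2 := by
      nlinarith [hx, hY2, sq_nonneg ‖gy x1 (ystar x1) - gy x2 (ystar x2)‖,
        mul_nonneg (mul_nonneg hLG hKnn) (sq_nonneg D),
        mul_nonneg (mul_nonneg hKnn hKnn) (sq_nonneg D)]
    calc ‖gx x1 (ystar x1) - gx x2 (ystar x2)‖ ^ 2 ≤ (LG + 2 * K) ^ 2 * D ^ 2 := hgoal
      _ = ((LG + 2 * LG ^ 2 / μy) * D) ^ 2 := by rw [hKdef]; ring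
end
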